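/- Let b : ℝ² → ℝ² be differentiable at a point x. Then limsup over |h|,|k| → 0 of sup_{θ ∈ [0,2π]} |⟨b(x+h)−b(x), e^{iθ}k⟩ − ⟨b(x+k)−b(x), e^{iθ}h⟩| / (|h||k|) equals 2|∂b(x)|. -/

import Mathlib

/-!
Write `A = Db(x)` and `∂A = (A 1 - i A i) / 2`. Since `A h = h.re A 1 + h.im A i`, the
antisymmetrized pairing `⟨A h, u k⟩ - ⟨A k, u h⟩` equals `-2 Im(∂A ū) Im(h k̄)`: its modulus is at
most `2 |∂A| |h| |k|` for `|u| = 1`, with equality for `h = r`, `k = i r` and a suitable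
`u = e^{iθ}`. Replacing `A` by the increments of `b` changes the pairing by `o(|h| |k|)`, so the
supremum itself converges to `2 |∂b(x)|` as `r → 0⁺`, and hence so does its limsup.
-/

open Filter Real Complex ComplexConjugate Asymptotics Set Topology

noncomputable def antisymmPairing (f : ℂ → ℂ) (u h k : ℂ) : ℝ :=
  (f h * conj (u * k)).re - (f k * conj (u * h)).re

noncomputable def wirtingerDeriv (A : ℂ →L[ℝ] ℂ) : ℂ := (A 1 - I * A I) / 2

lemma ContinuousLinearMap.apply_eq_re_mul_add_im_mul (A : ℂ →L[ℝ] ℂ) (h : ℂ) :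
    A h = h.re * A 1 + h.im * A I := by
  conv_lhs => rw [← re_add_im h, ← mul_one (h.re : ℂ), ← real_smul, ← real_smul]
  rw [map_add, map_smul, map_smul, real_smul, real_smul]

lemma antisymmPairing_clm (A : ℂ →L[ℝ] ℂ) (u h k : ℂ) :
    antisymmPairing A u h k = -2 * (wirtingerDeriv A * conj u).im * (h * conj k).im := by
  simp only [antisymmPairing, wirtingerDeriv, A.apply_eq_re_mul_add_im_mul h,
    A.apply_eq_re_mul_add_im_mul k]
  simp only [map_mul, mul_re, mul_im, add_re, add_im, sub_re, sub_im, conj_re, conj_im,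
    ofReal_re, ofReal_im, I_re, I_im, div_ofNat_re, div_ofNat_im]
  ring

lemma antisymmPairing_sub (f g : ℂ → ℂ) (u h k : ℂ) :
    antisymmPairing f u h k - antisymmPairing g u h k = antisymmPairing (f - g) u h k := by
  simp only [antisymmPairing, Pi.sub_apply, sub_mul, sub_re]
  ring

lemma abs_antisymmPairing_le (f : ℂ → ℂ) (u h k : ℂ) :
    |antisymmPairing f u h k| ≤ ‖u‖ * (‖f h‖ * ‖k‖ + ‖f k‖ * ‖h‖) := by
  have hre : ∀ z w : ℂ, |(z * conj w).re| ≤ ‖z‖ * ‖w‖ := fun z w =>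
    (abs_re_le_norm _).trans_eq (by rw [norm_mul, norm_conj])
  calc |antisymmPairing f u h k|
      ≤ |(f h * conj (u * k)).re| + |(f k * conj (u * h)).re| := abs_sub _ _
    _ ≤ ‖f h‖ * ‖u * k‖ + ‖f k‖ * ‖u * h‖ := add_le_add (hre _ _) (hre _ _)
    _ = ‖u‖ * (‖f h‖ * ‖k‖ + ‖f k‖ * ‖h‖) := by rw [norm_mul, norm_mul]; ring

lemma abs_antisymmPairing_clm_le (A : ℂ →L[ℝ] ℂ) {u : ℂ} (hu : ‖u‖ = 1) (h k : ℂ) :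
    |antisymmPairing A u h k| ≤ 2 * ‖wirtingerDeriv A‖ * (‖h‖ * ‖k‖) := by
  have him : ∀ z w : ℂ, |(z * conj w).im| ≤ ‖z‖ * ‖w‖ := fun z w =>
    (abs_im_le_norm _).trans_eq (by rw [norm_mul, norm_conj])
  rw [antisymmPairing_clm, abs_mul, abs_mul, abs_neg, abs_two, mul_assoc, mul_assoc]
  gcongr
  · simpa [hu] using him (wirtingerDeriv A) u
  · exact him h k

lemma abs_antisymmPairing_clm_ofReal_mul_I (A : ℂ →L[ℝ] ℂ) (u : ℂ) (r : ℝ) :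
    |antisymmPairing A u r (r * I)| = 2 * |(wirtingerDeriv A * conj u).im| * r ^ 2 := by
  rw [antisymmPairing_clm]
  simp [abs_mul, pow_two]

lemma exists_angle_abs_im_mul_conj_exp_eq_norm (p : ℂ) :
    ∃ θ ∈ Icc 0 (2 * π), |(p * conj (exp (θ * I))).im| = ‖p‖ := by
  have hper : Function.Periodic (fun θ : ℝ => exp (θ * I)) (2 * π) := fun θ => by
    simpa using exp_mul_I_periodic θ
  -- `θ ≡ arg p - π / 2` makes `p e^{-iθ} = i ‖p‖`.
  obtain ⟨θ, hθ, hexp⟩ := hper.exists_mem_Ico₀ two_pi_pos (arg p - π / 2)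
  refine ⟨θ, Ico_subset_Icc_self hθ, ?_⟩
  rw [← hexp]
  have : (p * conj (exp ((arg p - π / 2 : ℝ) * I))).im = ‖p‖ := by
    simp only [mul_im, conj_re, conj_im, exp_ofReal_mul_I_re, exp_ofReal_mul_I_im,
      Real.cos_sub_pi_div_two, Real.sin_sub_pi_div_two, ← norm_mul_cos_arg p, ← norm_mul_sin_arg p]
    linear_combination ‖p‖ * Real.sin_sq_add_cos_sq (arg p)
  rw [this, abs_norm]

lemma abs_antisymmPairing_sub_clm_le {f : ℂ → ℂ} {A : ℂ →L[ℝ] ℂ} {ε : ℝ} {u h k : ℂ}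
    (hu : ‖u‖ = 1) (hh : ‖f h - A h‖ ≤ ε * ‖h‖) (hk : ‖f k - A k‖ ≤ ε * ‖k‖) :
    |antisymmPairing f u h k - antisymmPairing A u h k| ≤ 2 * ε * (‖h‖ * ‖k‖) := by
  rw [antisymmPairing_sub]
  calc _ ≤ ‖u‖ * (‖(f - A) h‖ * ‖k‖ + ‖(f - A) k‖ * ‖h‖) := abs_antisymmPairing_le _ _ _ _
    _ ≤ 1 * (ε * ‖h‖ * ‖k‖ + ε * ‖k‖ * ‖h‖) := by rw [hu, Pi.sub_apply, Pi.sub_apply]; gcongr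
    _ = 2 * ε * (‖h‖ * ‖k‖) := by ring

lemma tendsto_csSup_of_forall_eventually {ι : Type*} {l : Filter ι} {S : ι → Set ℝ} {c : ℝ}
    (h : ∀ ε > 0, ∀ᶠ i in l, (∀ v ∈ S i, v ≤ c + ε) ∧ ∃ v ∈ S i, c - ε ≤ v) :
    Tendsto (fun i => sSup (S i)) l (𝓝 c) := by
  rw [Metric.tendsto_nhds]
  intro ε hε
  filter_upwards [h (ε / 2) (half_pos hε)] with i ⟨hup, v, hv, hlow⟩
  have hle : sSup (S i) ≤ c + ε / 2 := csSup_le ⟨v, hv⟩ hup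
  have hge : v ≤ sSup (S i) := le_csSup ⟨c + ε / 2, hup⟩ hv
  rw [Real.dist_eq, abs_sub_lt_iff]
  constructor <;> linarith

lemma Filter.Eventually.eventually_forall_norm_le {E : Type*} [SeminormedAddCommGroup E]
    {P : E → Prop} (hP : ∀ᶠ h in 𝓝 0, P h) : ∀ᶠ r in 𝓝[>] (0 : ℝ), ∀ h : E, ‖h‖ ≤ r → P h := by
  obtain ⟨δ, hδ, hball⟩ := Metric.eventually_nhds_iff.mp hP
  filter_upwards [Ioo_mem_nhdsGT hδ] with r hr h hh
  exact hball (by simpa using hh.trans_lt hr.2)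

theorem tendsto_sSup_abs_antisymmPairing_div {f : ℂ → ℂ} {A : ℂ →L[ℝ] ℂ}
    (hf : (fun h => f h - A h) =o[𝓝 0] fun h => h) :
    Tendsto (fun r : ℝ => sSup {v : ℝ | ∃ (h k : ℂ) (θ : ℝ), h ≠ 0 ∧ k ≠ 0 ∧ ‖h‖ ≤ r ∧
        ‖k‖ ≤ r ∧ θ ∈ Icc 0 (2 * π) ∧
        v = |antisymmPairing f (exp (θ * I)) h k| / (‖h‖ * ‖k‖)})
      (𝓝[>] 0) (𝓝 (2 * ‖wirtingerDeriv A‖)) := by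
  refine tendsto_csSup_of_forall_eventually fun ε hε => ?_
  filter_upwards [(hf.def (half_pos hε)).eventually_forall_norm_le, self_mem_nhdsWithin]
    with r hr (hr0 : 0 < r)
  have hcmp : ∀ {h k : ℂ} (θ : ℝ), ‖h‖ ≤ r → ‖k‖ ≤ r →
      |antisymmPairing f (exp (θ * I)) h k - antisymmPairing A (exp (θ * I)) h k|
        ≤ ε * (‖h‖ * ‖k‖) := fun θ hh hk => by
    simpa [mul_div_cancel₀ ε two_ne_zero] using
      abs_antisymmPairing_sub_clm_le (norm_exp_ofReal_mul_I θ) (hr _ hh) (hr _ hk)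
  constructor
  · rintro v ⟨h, k, θ, h0, k0, hh, hk, -, rfl⟩
    rw [div_le_iff₀ (mul_pos (norm_pos_iff.2 h0) (norm_pos_iff.2 k0))]
    linarith [abs_antisymmPairing_clm_le A (norm_exp_ofReal_mul_I θ) h k, hcmp θ hh hk,
      abs_sub_abs_le_abs_sub (antisymmPairing f (exp (θ * I)) h k)
        (antisymmPairing A (exp (θ * I)) h k)]
  · obtain ⟨θ, hθ, hp⟩ := exists_angle_abs_im_mul_conj_exp_eq_norm (wirtingerDeriv A)
    have hre : ‖(r : ℂ)‖ = r := by simp [hr0.le]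
    have him : ‖(r : ℂ) * I‖ = r := by simp [hr0.le]
    refine ⟨_, ⟨r, r * I, θ, ofReal_ne_zero.2 hr0.ne', by simp [hr0.ne'], hre.le, him.le, hθ,
      rfl⟩, ?_⟩
    rw [hre, him, le_div_iff₀ (mul_pos hr0 hr0)]
    have hA := abs_antisymmPairing_clm_ofReal_mul_I A (exp (θ * I)) r
    rw [hp] at hA
    have := hcmp θ hre.le him.le
    rw [hre, him, abs_sub_comm] at this
    nlinarith [abs_sub_abs_le_abs_sub (antisymmPairing A (exp (θ * I)) r (r * I))
        (antisymmPairing f (exp (θ * I)) r (r * I))]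

/-- If `b : ℂ → ℂ` is differentiable at `x`, then the limsup as `|h|, |k| → 0` of
`sup_{θ ∈ [0,2π]} |⟨b(x+h)−b(x), e^{iθ}k⟩ − ⟨b(x+k)−b(x), e^{iθ}h⟩| / (|h||k|)`
equals `2|∂b(x)|`, where `⟨z,w⟩ = Re(z·conj w)`. -/
theorem R_pointwise_limsup (b : ℂ → ℂ) (x : ℂ) (hb : DifferentiableAt ℝ b x) :
    Filter.limsup
      (fun r : ℝ => sSup {v : ℝ | ∃ (h k : ℂ) (θ : ℝ),
        h ≠ 0 ∧ k ≠ 0 ∧ ‖h‖ ≤ r ∧ ‖k‖ ≤ r ∧ θ ∈ Set.Icc 0 (2 * π) ∧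
        v = |((b (x + h) - b x) * (starRingEnd ℂ) (Complex.exp (θ * Complex.I) * k)).re
              - ((b (x + k) - b x) * (starRingEnd ℂ) (Complex.exp (θ * Complex.I) * h)).re|
            / (‖h‖ * ‖k‖)})
      (nhdsWithin 0 (Set.Ioi 0))
    = 2 * ‖(fderiv ℝ b x 1 - Complex.I * fderiv ℝ b x Complex.I) / 2‖ :=
  (tendsto_sSup_abs_antisymmPairing_div
    (f := fun h => b (x + h) - b x)
    (hasFDerivAt_iff_isLittleO_nhds_zero.mp hb.hasFDerivAt)).limsup_eq
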